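/- Let G = (V,E) be a finite simple graph and let A ∈ 𝒜_G be a nonnegative generalized adjacency matrix of G (all entries of A are ≥ 0). Then the Luz bound ℓ(A,·) : ℝ₊^V → ℝ is real-valued and is a positive definite monotone gauge, and for every w ∈ ℝ₊^V, α(G,w) ≤ ℓ(A,w) ≤ ‖w‖₁. -/

import Mathlib

open scoped BigOperators Pointwise

variable {V : Type*} [Fintype V] [DecidableEq V]

/-- Inner product on `ℝ^V`. -/
def ip (w z : V → ℝ) : ℝ := ∑ i, w i * z i

/-- `κ` is a positive definite monotone gauge on the nonnegative orthant of `ℝ^V`. -/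
def IsPDMGauge (κ : (V → ℝ) → ℝ) : Prop :=
  κ 0 = 0 ∧
  (∀ w : V → ℝ, 0 ≤ w → 0 ≤ κ w) ∧
  (∀ (c : ℝ) (w : V → ℝ), 0 < c → 0 ≤ w → κ (c • w) = c * κ w) ∧
  (∀ w z : V → ℝ, 0 ≤ w → 0 ≤ z → κ (w + z) ≤ κ w + κ z) ∧
  (∀ w : V → ℝ, 0 ≤ w → w ≠ 0 → 0 < κ w) ∧
  (∀ w z : V → ℝ, 0 ≤ w → w ≤ z → κ w ≤ κ z)

/-- The dual gauge `κ∘(z) = sup{⟨w,z⟩ : w ≥ 0, κ(w) ≤ 1}`. -/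
noncomputable def dualGauge (κ : (V → ℝ) → ℝ) (z : V → ℝ) : ℝ :=
  sSup {r : ℝ | ∃ w : V → ℝ, 0 ≤ w ∧ κ w ≤ 1 ∧ r = ip w z}

/-- The antiblocker of a subset of the nonnegative orthant. -/
def abl (X : Set (V → ℝ)) : Set (V → ℝ) := {y | 0 ≤ y ∧ ∀ x ∈ X, ip x y ≤ 1}

/-- A convex corner: compact, convex, nonempty interior, subset of the nonnegative
orthant, and lower-comprehensive. -/
def IsConvexCorner (C : Set (V → ℝ)) : Prop :=
  IsCompact C ∧ Convex ℝ C ∧ (interior C).Nonempty ∧ (∀ x ∈ C, 0 ≤ x) ∧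
  ∀ x y : V → ℝ, 0 ≤ x → x ≤ y → y ∈ C → x ∈ C

/-- Minkowski functional of a set. -/
noncomputable def minkowski (C : Set (V → ℝ)) (x : V → ℝ) : ℝ :=
  sInf {μ : ℝ | 0 ≤ μ ∧ x ∈ μ • C}

/-- Support function of a set. -/
noncomputable def suppFn (C : Set (V → ℝ)) (y : V → ℝ) : ℝ :=
  sSup {r : ℝ | ∃ x ∈ C, r = ip x y}

/-- A stable (independent) set of vertices. -/
def IsStableSet (G : SimpleGraph V) (S : Finset V) : Prop :=
  ∀ i ∈ S, ∀ j ∈ S, ¬ G.Adj i j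

/-- Weighted stability number `α(G,w)`. -/
noncomputable def alphaW (G : SimpleGraph V) (w : V → ℝ) : ℝ :=
  sSup {r : ℝ | ∃ S : Finset V, IsStableSet G S ∧ r = ∑ i ∈ S, w i}

/-- Stability number `α(G)`. -/
noncomputable def stabilityNumber (G : SimpleGraph V) : ℕ :=
  sSup {n : ℕ | ∃ S : Finset V, IsStableSet G S ∧ S.card = n}

/-- Weighted fractional chromatic number `χ_f(G,w)`. -/
noncomputable def chiF (G : SimpleGraph V) (w : V → ℝ) : ℝ :=
  sInf {r : ℝ | ∃ y : Finset V → ℝ,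
    (∀ S, 0 ≤ y S) ∧ (∀ S, ¬ IsStableSet G S → y S = 0) ∧
    (∀ i, w i ≤ ∑ S : Finset V, (if i ∈ S then y S else 0)) ∧
    r = ∑ S : Finset V, y S}

/-- The stable set polytope `STAB(G)`. -/
def STABset (G : SimpleGraph V) : Set (V → ℝ) :=
  convexHull ℝ {x : V → ℝ | ∃ S : Finset V, IsStableSet G S ∧
    x = fun i => if i ∈ S then (1 : ℝ) else 0}

/-- The fractional stable set polytope `QSTAB(G)`. -/
def QSTABset (H : SimpleGraph V) : Set (V → ℝ) :=
  {x | 0 ≤ x ∧ ∀ K : Finset V, H.IsClique (↑K : Set V) → ∑ i ∈ K, x i ≤ 1}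

/-- The set of (real) eigenvalues of a matrix. -/
def spectrumSet (M : Matrix V V ℝ) : Set ℝ :=
  {t | ∃ x : V → ℝ, x ≠ 0 ∧ M.mulVec x = t • x}

/-- Largest eigenvalue. -/
noncomputable def lambdaMax (M : Matrix V V ℝ) : ℝ := sSup (spectrumSet M)

/-- Smallest eigenvalue. -/
noncomputable def lambdaMin (M : Matrix V V ℝ) : ℝ := sInf (spectrumSet M)

/-- Positive semidefinite square root (zero on non-PSD matrices). -/
noncomputable def psdSqrt (M : Matrix V V ℝ) : Matrix V V ℝ :=
  letI := Classical.dec M.PosSemidef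
  if h : M.PosSemidef then
    h.1.eigenvectorUnitary.1 * Matrix.diagonal ((↑) ∘ (Real.sqrt ·) ∘ h.1.eigenvalues) *
      (star h.1.eigenvectorUnitary : Matrix V V ℝ)
  else 0

/-- `Â = A / (-λ_min(A))` for nonzero `A`, and `0̂ = 0`. -/
noncomputable def hatM (A : Matrix V V ℝ) : Matrix V V ℝ :=
  if A = 0 then 0 else (-(lambdaMin A))⁻¹ • A

/-- `A` is a generalized adjacency matrix of `G`: symmetric, with `A i j = 0`
whenever `i` and `j` are non-adjacent (in particular on the diagonal). -/
def IsGenAdj (G : SimpleGraph V) (A : Matrix V V ℝ) : Prop :=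
  A.IsSymm ∧ ∀ i j, ¬ G.Adj i j → A i j = 0

/-- Weighted Hoffman bound `H(A,w) = λ_max(W^{1/2}(I+Â)W^{1/2})`, `W = Diag w`. -/
noncomputable def hoffman (A : Matrix V V ℝ) (w : V → ℝ) : ℝ :=
  lambdaMax (psdSqrt (Matrix.diagonal w) * (1 + hatM A) * psdSqrt (Matrix.diagonal w))

/-- The feasible region `𝒰_A` of the SDP defining `Υ(A,·)`. -/
def Uset (A : Matrix V V ℝ) : Set (V → ℝ) :=
  {x | 0 ≤ x ∧ ((1 : Matrix V V ℝ) -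
    psdSqrt (1 + hatM A) * Matrix.diagonal x * psdSqrt (1 + hatM A)).PosSemidef}

/-- `Υ(A,w) = max{⟨w,x⟩ : x ≥ 0, (I+Â)^{1/2} Diag(x) (I+Â)^{1/2} ⪯ I}`. -/
noncomputable def upsilon (A : Matrix V V ℝ) (w : V → ℝ) : ℝ :=
  sSup {r : ℝ | ∃ x ∈ Uset A, r = ip w x}

/-- The diagonal of a matrix, as a vector. -/
def diagVec (M : Matrix V V ℝ) : V → ℝ := fun i => M i i

/-- The convex corner `ℋ_A`. -/
def Hset (A : Matrix V V ℝ) : Set (V → ℝ) :=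
  {x | 0 ≤ x ∧ ∃ Y : Matrix V V ℝ, Y.PosSemidef ∧ Y.trace ≤ 1 ∧
    ∀ i, x i ≤ diagVec (psdSqrt (1 + hatM A) * Y * psdSqrt (1 + hatM A)) i}

/-- Objective function of Luz's convex quadratic program:
`2⟨w,x⟩ − ⟨x, W^{1/2}(I+Â)W^{1/2} x⟩`. -/
noncomputable def luzObj (A : Matrix V V ℝ) (w x : V → ℝ) : ℝ :=
  2 * ip w x - ∑ i, x i *
    ((psdSqrt (Matrix.diagonal w) * (1 + hatM A) * psdSqrt (Matrix.diagonal w)).mulVec x) i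

/-- Luz's bound `ℓ(A,w)` as a real number (supremum of the CQP objective). -/
noncomputable def luz (A : Matrix V V ℝ) (w : V → ℝ) : ℝ :=
  sSup {r : ℝ | ∃ x : V → ℝ, 0 ≤ x ∧ r = luzObj A w x}

/-- Luz's bound `ℓ(A,w)` with values in `ℝ ∪ {±∞}`. -/
noncomputable def luzE (A : Matrix V V ℝ) (w : V → ℝ) : EReal :=
  sSup {r : EReal | ∃ x : V → ℝ, 0 ≤ x ∧ r = ((luzObj A w x : ℝ) : EReal)}

/-- The theta body `TH(G)`. -/
def THbody (G : SimpleGraph V) : Set (V → ℝ) :=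
  {x | 0 ≤ x ∧ ∃ X : Matrix V V ℝ, X.PosSemidef ∧ (∀ i, X i i = x i) ∧
    (∀ i j, G.Adj i j → X i j = 0) ∧
    (Matrix.fromBlocks (1 : Matrix Unit Unit ℝ) (Matrix.of fun _ j => x j)
      (Matrix.of fun i _ => x i) X).PosSemidef}

/-- Weighted Lovász theta number `θ(G,w)`. -/
noncomputable def thetaW (G : SimpleGraph V) (w : V → ℝ) : ℝ :=
  sSup {r : ℝ | ∃ x ∈ THbody G, r = ip w x}

section Aux
variable {V : Type*} [Fintype V] [DecidableEq V]

lemma psdSqrt_diagonal {w : V → ℝ} (hw : 0 ≤ w) :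
    psdSqrt (Matrix.diagonal w) = Matrix.diagonal (fun i => Real.sqrt (w i)) := by
  have hPSD : (Matrix.diagonal w).PosSemidef :=
    Matrix.posSemidef_diagonal_iff.mpr (fun i => hw i)
  have hS : (Matrix.diagonal (fun i => Real.sqrt (w i))).PosSemidef :=
    Matrix.posSemidef_diagonal_iff.mpr (fun i => Real.sqrt_nonneg _)
  have hsq : (Matrix.diagonal (fun i => Real.sqrt (w i))) ^ 2 = Matrix.diagonal w := by
    have h2 : (fun i => Real.sqrt (w i) * Real.sqrt (w i)) = w :=
      funext fun i => Real.mul_self_sqrt (hw i)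
    rw [pow_two, Matrix.diagonal_mul_diagonal, h2]
  have key : psdSqrt (Matrix.diagonal w) = cfc Real.sqrt (Matrix.diagonal w) := by
    rw [hPSD.1.cfc_eq, psdSqrt, dif_pos hPSD, Matrix.IsHermitian.cfc, Unitary.conjStarAlgAut_apply]
    rfl
  open scoped MatrixOrder in
  rw [key, ← cfcₙ_eq_cfc (f := Real.sqrt) (a := Matrix.diagonal w)
    Real.continuous_sqrt.continuousOn Real.sqrt_zero,
    ← CFC.sqrt_eq_real_sqrt _ (Matrix.nonneg_iff_posSemidef.mpr hPSD)]
  open scoped MatrixOrder in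
  exact CFC.sqrt_unique (by rw [← pow_two]; exact hsq) (Matrix.nonneg_iff_posSemidef.mpr hS)

lemma spectrumSet_bddBelow (A : Matrix V V ℝ) : BddBelow (spectrumSet A) := by
  refine ⟨-(∑ i, ∑ j, |A i j|), ?_⟩
  rintro t ⟨x, hx, hEq⟩
  obtain ⟨i1, hi1⟩ := Function.ne_iff.mp hx
  have hne : (Finset.univ : Finset V).Nonempty := ⟨i1, Finset.mem_univ _⟩
  obtain ⟨i0, -, hmax⟩ := Finset.exists_max_image Finset.univ (fun i => |x i|) hne
  have hp : 0 < |x i0| := lt_of_lt_of_le (abs_pos.mpr hi1) (hmax i1 (Finset.mem_univ _))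
  have h0 : t * x i0 = ∑ j, A i0 j * x j := by
    have := congrFun hEq i0
    simp only [Matrix.mulVec, dotProduct, Pi.smul_apply, smul_eq_mul] at this
    exact this.symm
  have hbound : |t| * |x i0| ≤ (∑ i, ∑ j, |A i j|) * |x i0| := by
    calc |t| * |x i0| = |t * x i0| := (abs_mul _ _).symm
      _ = |∑ j, A i0 j * x j| := by rw [h0]
      _ ≤ ∑ j, |A i0 j * x j| := Finset.abs_sum_le_sum_abs _ _
      _ ≤ ∑ j, |A i0 j| * |x i0| := by
          refine Finset.sum_le_sum fun j _ => ?_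
          rw [abs_mul]
          exact mul_le_mul_of_nonneg_left (hmax j (Finset.mem_univ _)) (abs_nonneg _)
      _ = (∑ j, |A i0 j|) * |x i0| := by rw [Finset.sum_mul]
      _ ≤ (∑ i, ∑ j, |A i j|) * |x i0| := by
          refine mul_le_mul_of_nonneg_right ?_ hp.le
          exact Finset.single_le_sum (f := fun i => ∑ j, |A i j|)
            (fun i _ => Finset.sum_nonneg fun j _ => abs_nonneg _) (Finset.mem_univ i0)
  have := le_of_mul_le_mul_right hbound hp
  linarith [neg_abs_le t]


lemma lambdaMin_nonpos {A : Matrix V V ℝ} (hsymm : A.IsSymm) (hdiag : ∀ i, A i i = 0)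
    (hpos : ∀ i j, 0 ≤ A i j) (hA0 : A ≠ 0) : lambdaMin A ≤ 0 := by
  have hherm : A.IsHermitian := by
    ext i j
    rw [Matrix.conjTranspose_apply, star_trivial]
    exact congrFun (congrFun hsymm i) j
  -- there is a negative quadratic form value
  obtain ⟨i, j, hij⟩ : ∃ i j, A i j ≠ 0 := by
    by_contra h
    push_neg at h
    exact hA0 (by ext i j; simp [h i j])
  have hAij : 0 < A i j := lt_of_le_of_ne (hpos i j) (Ne.symm hij)
  have hne : i ≠ j := by
    rintro rfl; exact hij (hdiag i)
  -- some eigenvalue is nonpositive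
  obtain ⟨k, hk⟩ : ∃ k, hherm.eigenvalues k ≤ 0 := by
    by_contra h
    push_neg at h
    have hPSD : A.PosSemidef :=
      hherm.posSemidef_iff_eigenvalues_nonneg.mpr fun k => (h k).le
    set x : V → ℝ := (Pi.single i 1 : V → ℝ) - Pi.single j 1 with hxdef
    have this2 := hPSD.dotProduct_mulVec_nonneg x
    rw [star_trivial] at this2
    have hquad : dotProduct x (A.mulVec x) = -(2 * A i j) := by
      have hji : A j i = A i j := by
        have := congrFun (congrFun hsymm i) j
        simpa [Matrix.transpose_apply] using this
      simp [hxdef, dotProduct, Matrix.mulVec, Pi.single_apply, sub_mul, mul_sub,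
        Finset.sum_sub_distrib, Finset.mul_sum, hne, Ne.symm hne, hdiag, hji]
      ring
    rw [hquad] at this2
    linarith
  have hmem : hherm.eigenvalues k ∈ spectrumSet A :=
    ⟨⇑(hherm.eigenvectorBasis k), by
      intro h
      apply hherm.eigenvectorBasis.orthonormal.ne_zero k
      ext i
      simpa using congrFun h i, hherm.mulVec_eigenvectorBasis k⟩
  exact le_trans (csInf_le (spectrumSet_bddBelow A) hmem) hk

lemma hatM_nonneg {G : SimpleGraph V} {A : Matrix V V ℝ} (hA : IsGenAdj G A)
    (hpos : ∀ i j, 0 ≤ A i j) (i j : V) : 0 ≤ hatM A i j := by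
  unfold hatM
  split_ifs with h
  · simp
  · have hdiag : ∀ i, A i i = 0 := fun i => hA.2 i i (SimpleGraph.irrefl G)
    have hl := lambdaMin_nonpos hA.1 hdiag hpos h
    have hc : 0 ≤ (-(lambdaMin A))⁻¹ := inv_nonneg.mpr (by linarith)
    simp only [Matrix.smul_apply, smul_eq_mul]
    exact mul_nonneg hc (hpos i j)

lemma hatM_zero_of_not_adj {G : SimpleGraph V} {A : Matrix V V ℝ} (hA : IsGenAdj G A)
    {i j : V} (hnadj : ¬ G.Adj i j) : hatM A i j = 0 := by
  unfold hatM
  split_ifs with h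
  · simp
  · simp only [Matrix.smul_apply, smul_eq_mul, hA.2 i j hnadj, mul_zero]

lemma luzObj_formula (A : Matrix V V ℝ) {w : V → ℝ} (hw : 0 ≤ w) (x : V → ℝ) :
    luzObj A w x = 2 * ip w x - (∑ i, w i * x i ^ 2 +
      ∑ i, ∑ j, (Real.sqrt (w i) * x i) * (hatM A i j * (Real.sqrt (w j) * x j))) := by
  unfold luzObj
  rw [psdSqrt_diagonal hw]
  set s : V → ℝ := fun i => Real.sqrt (w i) with hs
  have hM : ∀ i j, (Matrix.diagonal s * (1 + hatM A) * Matrix.diagonal s) i j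
      = s i * ((1 : Matrix V V ℝ) + hatM A) i j * s j := by
    intro i j
    rw [Matrix.mul_diagonal, Matrix.diagonal_mul]
  congr 1
  calc ∑ i, x i * ((Matrix.diagonal s * (1 + hatM A) * Matrix.diagonal s).mulVec x) i
      = ∑ i, ∑ j, ((if i = j then (s i * x i) * (s j * x j) else 0)
          + (s i * x i) * (hatM A i j * (s j * x j))) := by
        refine Finset.sum_congr rfl fun i _ => ?_
        rw [Matrix.mulVec, dotProduct, Finset.mul_sum]
        refine Finset.sum_congr rfl fun j _ => ?_
        show x i * ((Matrix.diagonal s * (1 + hatM A) * Matrix.diagonal s) i j * x j) = _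
        rw [hM, Matrix.add_apply, Matrix.one_apply]
        split_ifs with h
        · subst h; ring
        · ring
    _ = ∑ i, w i * x i ^ 2 + ∑ i, ∑ j, (s i * x i) * (hatM A i j * (s j * x j)) := by
        simp only [Finset.sum_add_distrib]
        congr 1
        refine Finset.sum_congr rfl fun i _ => ?_
        simp only [Finset.sum_ite_eq, Finset.mem_univ, if_true]
        have hss : s i * s i = w i := Real.mul_self_sqrt (hw i)
        calc (s i * x i) * (s i * x i) = (s i * s i) * x i ^ 2 := by ring
          _ = w i * x i ^ 2 := by rw [hss]

set_option linter.unusedSectionVars false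

lemma luzObj_le_sum {G : SimpleGraph V} {A : Matrix V V ℝ} (hA : IsGenAdj G A)
    (hpos : ∀ i j, 0 ≤ A i j) {w x : V → ℝ} (hw : 0 ≤ w) (hx : 0 ≤ x) :
    luzObj A w x ≤ ∑ i, w i := by
  rw [luzObj_formula A hw x]
  have hR : 0 ≤ ∑ i, ∑ j, (Real.sqrt (w i) * x i) * (hatM A i j * (Real.sqrt (w j) * x j)) :=
    Finset.sum_nonneg fun i _ => Finset.sum_nonneg fun j _ =>
      mul_nonneg (mul_nonneg (Real.sqrt_nonneg _) (hx i))
        (mul_nonneg (hatM_nonneg hA hpos i j) (mul_nonneg (Real.sqrt_nonneg _) (hx j)))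
  have hmain : 2 * ip w x - ∑ i, w i * x i ^ 2 ≤ ∑ i, w i := by
    rw [ip, Finset.mul_sum, ← Finset.sum_sub_distrib]
    refine Finset.sum_le_sum fun i _ => ?_
    nlinarith [mul_nonneg (hw i) (sq_nonneg (x i - 1))]
  linarith

lemma luzObj_stable {G : SimpleGraph V} {A : Matrix V V ℝ} (hA : IsGenAdj G A)
    {w : V → ℝ} (hw : 0 ≤ w) {S : Finset V} (hS : IsStableSet G S) :
    luzObj A w (fun i => if i ∈ S then (1 : ℝ) else 0) = ∑ i ∈ S, w i := by
  rw [luzObj_formula A hw]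
  have h1 : ip w (fun i => if i ∈ S then (1 : ℝ) else 0) = ∑ i ∈ S, w i := by
    rw [ip]
    simp [mul_ite, Finset.sum_ite_mem]
  have h2 : ∑ i, w i * (if i ∈ S then (1 : ℝ) else 0) ^ 2 = ∑ i ∈ S, w i := by
    refine Eq.trans (Finset.sum_congr rfl fun i _ => ?_) (by simp [Finset.sum_ite_mem] :
      ∑ i, (if i ∈ S then w i else 0) = ∑ i ∈ S, w i)
    split_ifs <;> ring
  have h3 : ∑ i, ∑ j, (Real.sqrt (w i) * (if i ∈ S then (1 : ℝ) else 0)) *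
      (hatM A i j * (Real.sqrt (w j) * (if j ∈ S then (1 : ℝ) else 0))) = 0 := by
    refine Finset.sum_eq_zero fun i _ => Finset.sum_eq_zero fun j _ => ?_
    by_cases hi : i ∈ S
    · by_cases hj : j ∈ S
      · rw [hatM_zero_of_not_adj hA (hS i hi j hj)]; ring
      · simp [hj]
    · simp [hi]
  rw [h1, h2, h3]; ring

lemma luzObj_smul {A : Matrix V V ℝ} {c : ℝ} (hc : 0 ≤ c) {w : V → ℝ} (hw : 0 ≤ w)
    (x : V → ℝ) : luzObj A (c • w) x = c * luzObj A w x := by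
  have hcw : (0 : V → ℝ) ≤ c • w := fun i => mul_nonneg hc (hw i)
  have hsc : Real.sqrt c * Real.sqrt c = c := Real.mul_self_sqrt hc
  rw [luzObj_formula A hcw x, luzObj_formula A hw x]
  have hip : ip (c • w) x = c * ip w x := by
    rw [ip, ip, Finset.mul_sum]
    exact Finset.sum_congr rfl fun i _ => by simp [mul_assoc]
  have hq : ∑ i, (c • w) i * x i ^ 2 = c * ∑ i, w i * x i ^ 2 := by
    rw [Finset.mul_sum]
    exact Finset.sum_congr rfl fun i _ => by simp [mul_assoc]
  have hR : ∑ i, ∑ j, (Real.sqrt ((c • w) i) * x i) *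
        (hatM A i j * (Real.sqrt ((c • w) j) * x j))
      = c * ∑ i, ∑ j, (Real.sqrt (w i) * x i) * (hatM A i j * (Real.sqrt (w j) * x j)) := by
    rw [Finset.mul_sum]
    refine Finset.sum_congr rfl fun i _ => ?_
    rw [Finset.mul_sum]
    refine Finset.sum_congr rfl fun j _ => ?_
    have hi : Real.sqrt ((c • w) i) = Real.sqrt c * Real.sqrt (w i) := by
      rw [Pi.smul_apply, smul_eq_mul, Real.sqrt_mul hc]
    have hj : Real.sqrt ((c • w) j) = Real.sqrt c * Real.sqrt (w j) := by
      rw [Pi.smul_apply, smul_eq_mul, Real.sqrt_mul hc]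
    rw [hi, hj]
    calc (Real.sqrt c * Real.sqrt (w i) * x i) *
          (hatM A i j * (Real.sqrt c * Real.sqrt (w j) * x j))
        = (Real.sqrt c * Real.sqrt c) *
          ((Real.sqrt (w i) * x i) * (hatM A i j * (Real.sqrt (w j) * x j))) := by ring
      _ = c * ((Real.sqrt (w i) * x i) * (hatM A i j * (Real.sqrt (w j) * x j))) := by
          rw [hsc]
  rw [hip, hq, hR]; ring

lemma sqrt_cs {a b c d : ℝ} (ha : 0 ≤ a) (hb : 0 ≤ b) (hc : 0 ≤ c) (hd : 0 ≤ d) :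
    Real.sqrt a * Real.sqrt b + Real.sqrt c * Real.sqrt d
      ≤ Real.sqrt (a + c) * Real.sqrt (b + d) := by
  have hx0 : 0 ≤ Real.sqrt a * Real.sqrt b + Real.sqrt c * Real.sqrt d := by positivity
  have hy0 : 0 ≤ Real.sqrt (a + c) * Real.sqrt (b + d) := by positivity
  have h2 : (Real.sqrt a * Real.sqrt b + Real.sqrt c * Real.sqrt d) ^ 2
      ≤ (Real.sqrt (a + c) * Real.sqrt (b + d)) ^ 2 := by
    have e1 : (Real.sqrt (a + c) * Real.sqrt (b + d)) ^ 2 = (a + c) * (b + d) := by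
      rw [mul_pow, Real.sq_sqrt (by linarith), Real.sq_sqrt (by linarith)]
    rw [e1]
    nlinarith [sq_nonneg (Real.sqrt a * Real.sqrt d - Real.sqrt c * Real.sqrt b),
      Real.sq_sqrt ha, Real.sq_sqrt hb, Real.sq_sqrt hc, Real.sq_sqrt hd,
      Real.sqrt_nonneg a, Real.sqrt_nonneg b, Real.sqrt_nonneg c, Real.sqrt_nonneg d]
  calc Real.sqrt a * Real.sqrt b + Real.sqrt c * Real.sqrt d
      = Real.sqrt ((Real.sqrt a * Real.sqrt b + Real.sqrt c * Real.sqrt d) ^ 2) :=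
        (Real.sqrt_sq hx0).symm
    _ ≤ Real.sqrt ((Real.sqrt (a + c) * Real.sqrt (b + d)) ^ 2) := Real.sqrt_le_sqrt h2
    _ = Real.sqrt (a + c) * Real.sqrt (b + d) := Real.sqrt_sq hy0

lemma luzObj_subadd {G : SimpleGraph V} {A : Matrix V V ℝ} (hA : IsGenAdj G A)
    (hpos : ∀ i j, 0 ≤ A i j) {w z x : V → ℝ} (hw : 0 ≤ w) (hz : 0 ≤ z) (hx : 0 ≤ x) :
    luzObj A (w + z) x ≤ luzObj A w x + luzObj A z x := by
  have hwz : (0 : V → ℝ) ≤ w + z := fun i => add_nonneg (hw i) (hz i)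
  rw [luzObj_formula A hwz x, luzObj_formula A hw x, luzObj_formula A hz x]
  have hip : ip (w + z) x = ip w x + ip z x := by
    rw [ip, ip, ip, ← Finset.sum_add_distrib]
    exact Finset.sum_congr rfl fun i _ => by simp [add_mul]
  have hq : ∑ i, (w + z) i * x i ^ 2 = ∑ i, w i * x i ^ 2 + ∑ i, z i * x i ^ 2 := by
    rw [← Finset.sum_add_distrib]
    exact Finset.sum_congr rfl fun i _ => by simp [add_mul]
  have hR : ∑ i, ∑ j, (Real.sqrt (w i) * x i) * (hatM A i j * (Real.sqrt (w j) * x j))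
      + ∑ i, ∑ j, (Real.sqrt (z i) * x i) * (hatM A i j * (Real.sqrt (z j) * x j))
      ≤ ∑ i, ∑ j, (Real.sqrt ((w + z) i) * x i) *
          (hatM A i j * (Real.sqrt ((w + z) j) * x j)) := by
    rw [← Finset.sum_add_distrib]
    refine Finset.sum_le_sum fun i _ => ?_
    rw [← Finset.sum_add_distrib]
    refine Finset.sum_le_sum fun j _ => ?_
    have hB : 0 ≤ hatM A i j * (x i * x j) :=
      mul_nonneg (hatM_nonneg hA hpos i j) (mul_nonneg (hx i) (hx j))
    have hcs := sqrt_cs (hw i) (hw j) (hz i) (hz j)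
    have hij : (w + z) i = w i + z i := rfl
    have hij' : (w + z) j = w j + z j := rfl
    rw [hij, hij']
    nlinarith [mul_le_mul_of_nonneg_left hcs hB]
  rw [hip, hq]
  linarith

lemma luzObj_mono {A : Matrix V V ℝ}
    {w z x : V → ℝ} (hw : 0 ≤ w) (hwz : w ≤ z) (hx : 0 ≤ x) :
    ∃ y : V → ℝ, 0 ≤ y ∧ luzObj A w x ≤ luzObj A z y := by
  have hz : (0 : V → ℝ) ≤ z := le_trans hw hwz
  refine ⟨fun i => Real.sqrt (w i) * x i * (Real.sqrt (z i))⁻¹,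
    fun i => mul_nonneg (mul_nonneg (Real.sqrt_nonneg _) (hx i))
      (inv_nonneg.mpr (Real.sqrt_nonneg _)), ?_⟩
  set y : V → ℝ := fun i => Real.sqrt (w i) * x i * (Real.sqrt (z i))⁻¹ with hy
  have key : ∀ i, Real.sqrt (z i) * y i = Real.sqrt (w i) * x i := by
    intro i
    by_cases h : z i = 0
    · have hwi : w i = 0 := le_antisymm (h ▸ hwz i) (hw i)
      simp [hy, h, hwi]
    · have hzi : Real.sqrt (z i) ≠ 0 := Real.sqrt_ne_zero'.mpr (lt_of_le_of_ne (hz i) (Ne.symm h))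
      rw [hy]
      field_simp
  rw [luzObj_formula A hw x, luzObj_formula A hz y]
  have hq : ∀ i, z i * y i ^ 2 = w i * x i ^ 2 := by
    intro i
    have h1 : (Real.sqrt (z i) * y i) ^ 2 = (Real.sqrt (w i) * x i) ^ 2 := by rw [key i]
    have h2 : (Real.sqrt (z i)) ^ 2 = z i := Real.sq_sqrt (hz i)
    have h3 : (Real.sqrt (w i)) ^ 2 = w i := Real.sq_sqrt (hw i)
    nlinarith [h1, h2, h3]
  have hR : ∑ i, ∑ j, (Real.sqrt (z i) * y i) * (hatM A i j * (Real.sqrt (z j) * y j))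
      = ∑ i, ∑ j, (Real.sqrt (w i) * x i) * (hatM A i j * (Real.sqrt (w j) * x j)) := by
    refine Finset.sum_congr rfl fun i _ => Finset.sum_congr rfl fun j _ => ?_
    rw [key i, key j]
  have hlin : ∀ i, w i * x i ≤ z i * y i := by
    intro i
    have h1 : z i * y i = Real.sqrt (z i) * (Real.sqrt (w i) * x i) := by
      conv_lhs => rw [← Real.mul_self_sqrt (hz i)]
      rw [mul_assoc, key i]
    have h2 : w i * x i = Real.sqrt (w i) * (Real.sqrt (w i) * x i) := by
      conv_lhs => rw [← Real.mul_self_sqrt (hw i)]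
      rw [mul_assoc]
    rw [h1, h2]
    exact mul_le_mul_of_nonneg_right (Real.sqrt_le_sqrt (hwz i))
      (mul_nonneg (Real.sqrt_nonneg _) (hx i))
  have hip : ip w x ≤ ip z y := Finset.sum_le_sum fun i _ => hlin i
  have hqq : ∑ i, z i * y i ^ 2 = ∑ i, w i * x i ^ 2 :=
    Finset.sum_congr rfl fun i _ => hq i
  rw [hR, hqq]
  linarith

end Aux


/-- for a nonnegative generalized adjacency matrix `A` of `G`,
the Luz bound `ℓ(A,·)` is real-valued (the CQP objective is bounded above), is
a positive definite monotone gauge, and `α(G,w) ≤ ℓ(A,w) ≤ ‖w‖₁`. -/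
theorem luz_pdmg_bound (G : SimpleGraph V) (A : Matrix V V ℝ)
    (hA : IsGenAdj G A) (hpos : ∀ i j, 0 ≤ A i j) :
    (∀ w : V → ℝ, 0 ≤ w →
      BddAbove {r : ℝ | ∃ x : V → ℝ, 0 ≤ x ∧ r = luzObj A w x}) ∧
    IsPDMGauge (luz A) ∧
    ∀ w : V → ℝ, 0 ≤ w → alphaW G w ≤ luz A w ∧ luz A w ≤ ∑ i, |w i| := by
  have hbdd : ∀ w : V → ℝ, 0 ≤ w →
      BddAbove {r : ℝ | ∃ x : V → ℝ, 0 ≤ x ∧ r = luzObj A w x} := by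
    intro w hw
    exact ⟨∑ i, w i, by rintro r ⟨x, hx, rfl⟩; exact luzObj_le_sum hA hpos hw hx⟩
  have hne : ∀ w : V → ℝ, {r : ℝ | ∃ x : V → ℝ, 0 ≤ x ∧ r = luzObj A w x}.Nonempty :=
    fun w => ⟨luzObj A w 0, 0, le_refl _, rfl⟩
  have hzero : ∀ w : V → ℝ, 0 ≤ w → luzObj A w 0 = 0 := by
    intro w hw
    rw [luzObj_formula A hw 0]
    simp [ip]
  have hle : ∀ w : V → ℝ, 0 ≤ w → ∀ x : V → ℝ, 0 ≤ x → luzObj A w x ≤ luz A w :=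
    fun w hw x hx => le_csSup (hbdd w hw) ⟨x, hx, rfl⟩
  have hsup_le : ∀ w : V → ℝ, ∀ b : ℝ,
      (∀ x : V → ℝ, 0 ≤ x → luzObj A w x ≤ b) → luz A w ≤ b := by
    intro w b hb
    exact csSup_le (hne w) (by rintro r ⟨x, hx, rfl⟩; exact hb x hx)
  refine ⟨hbdd, ⟨?_, ?_, ?_, ?_, ?_, ?_⟩, ?_⟩
  · -- luz A 0 = 0
    have h0 : {r : ℝ | ∃ x : V → ℝ, 0 ≤ x ∧ r = luzObj A 0 x} = {0} := by
      ext r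
      constructor
      · rintro ⟨x, hx, rfl⟩
        have : luzObj A (0 : V → ℝ) x = 0 := by
          rw [luzObj_formula A (le_refl (0 : V → ℝ)) x]
          simp [ip]
        simp [this]
      · rintro rfl
        exact ⟨0, le_refl _, (hzero 0 (le_refl _)).symm⟩
    rw [luz, h0, csSup_singleton]
  · -- nonneg
    intro w hw
    have := hle w hw 0 (le_refl _)
    rw [hzero w hw] at this
    exact this
  · -- homogeneous
    intro c w hc hw
    have hset : {r : ℝ | ∃ x : V → ℝ, 0 ≤ x ∧ r = luzObj A (c • w) x}
        = c • {r : ℝ | ∃ x : V → ℝ, 0 ≤ x ∧ r = luzObj A w x} := by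
      ext r
      constructor
      · rintro ⟨x, hx, rfl⟩
        exact ⟨luzObj A w x, ⟨x, hx, rfl⟩, (luzObj_smul hc.le hw x).symm⟩
      · rintro ⟨r', ⟨x, hx, rfl⟩, rfl⟩
        exact ⟨x, hx, (luzObj_smul hc.le hw x).symm⟩
    rw [luz, hset, Real.sSup_smul_of_nonneg hc.le, smul_eq_mul, luz]
  · -- subadditive
    intro w z hw hz
    refine hsup_le (w + z) _ fun x hx => ?_
    calc luzObj A (w + z) x ≤ luzObj A w x + luzObj A z x := luzObj_subadd hA hpos hw hz hx
      _ ≤ luz A w + luz A z := add_le_add (hle w hw x hx) (hle z hz x hx)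
  · -- positive definite
    intro w hw hwne
    obtain ⟨i, hi⟩ := Function.ne_iff.mp hwne
    have hwi : 0 < w i := lt_of_le_of_ne (hw i) (Ne.symm hi)
    have hstab : IsStableSet G ({i} : Finset V) := by
      intro a ha b hb
      rw [Finset.mem_singleton] at ha hb
      subst ha; subst hb
      exact G.irrefl
    have hval := luzObj_stable hA hw hstab
    rw [Finset.sum_singleton] at hval
    have hxnn : (0 : V → ℝ) ≤ fun j => if j ∈ ({i} : Finset V) then (1 : ℝ) else 0 := by
      intro j; dsimp; split_ifs <;> norm_num
    calc (0 : ℝ) < w i := hwi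
      _ = luzObj A w (fun j => if j ∈ ({i} : Finset V) then (1 : ℝ) else 0) := hval.symm
      _ ≤ luz A w := hle w hw _ hxnn
  · -- monotone
    intro w z hw hwz
    refine hsup_le w _ fun x hx => ?_
    obtain ⟨y, hy, hxy⟩ := luzObj_mono (A := A) hw hwz hx
    exact le_trans hxy (hle z (le_trans hw hwz) y hy)
  · -- bounds
    intro w hw
    constructor
    · -- alphaW ≤ luz
      refine csSup_le ⟨0, ∅, ?_, by simp⟩ ?_
      · intro a ha; simp at ha
      · rintro r ⟨S, hS, rfl⟩
        rw [← luzObj_stable hA hw hS]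
        refine hle w hw _ ?_
        intro j; dsimp; split_ifs <;> norm_num
    · -- luz ≤ ∑ |w i|
      refine hsup_le w _ fun x hx => ?_
      calc luzObj A w x ≤ ∑ i, w i := luzObj_le_sum hA hpos hw hx
        _ = ∑ i, |w i| := Finset.sum_congr rfl fun i _ => (abs_of_nonneg (hw i)).symm
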